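/- arXiv:2404.19241 — 2 statements merged into one kernel-verified Lean document; each statement's English description precedes it below -/
import Mathlib

section
/- (Special case of Le Cam's theorem) For λ ≥ 0 and n ≥ λ, the total variation distance between Binomial(n, λ/n) and Poisson(λ) satisfies Σ_{k=0}^∞ |P[Bin(n,λ/n)=k] − P[Poisson(λ)=k]| ≤ 2λ²/n. -/
/-- Poisson pmf with mean `l`. -/
noncomputable def poissonPmf (l : ℝ) (k : ℕ) : ℝ := Real.exp (-l) * l ^ k / (Nat.factorial k)

/-- Binomial pmf with `n` trials and success probability `p`. -/
noncomputable def binomialPmf (n : ℕ) (p : ℝ) (k : ℕ) : ℝ :=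
  if k ≤ n then (n.choose k : ℝ) * p ^ k * (1 - p) ^ (n - k) else 0

open Finset

/-- Convolution of two sequences on ℕ. -/
noncomputable def lcConv (f g : ℕ → ℝ) (k : ℕ) : ℝ := ∑ i ∈ range (k + 1), f i * g (k - i)

lemma pois_nonneg {l : ℝ} (hl : 0 ≤ l) (k : ℕ) : 0 ≤ poissonPmf l k := by
  unfold poissonPmf
  have := pow_nonneg hl k
  positivity

lemma pois_eq (l : ℝ) (k : ℕ) : poissonPmf l k = Real.exp (-l) * (l ^ k / k.factorial) := by
  rw [poissonPmf, mul_div_assoc]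

lemma pois_summable (l : ℝ) : Summable (poissonPmf l) := by
  refine Summable.congr ((Real.summable_pow_div_factorial l).mul_left (Real.exp (-l))) ?_
  intro k; rw [pois_eq]

lemma pois_tsum {l : ℝ} : ∑' k, poissonPmf l k = 1 := by
  have h : Real.exp l = ∑' n : ℕ, l ^ n / n.factorial := by
    rw [Real.exp_eq_exp_ℝ, NormedSpace.exp_eq_tsum_div]
  calc ∑' k, poissonPmf l k = ∑' k, Real.exp (-l) * (l ^ k / k.factorial) := by
        exact tsum_congr (pois_eq l)
    _ = Real.exp (-l) * ∑' k : ℕ, l ^ k / k.factorial := tsum_mul_left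
    _ = Real.exp (-l) * Real.exp l := by rw [h]
    _ = 1 := by rw [← Real.exp_add]; simp

lemma pois_conv (a b : ℝ) (k : ℕ) :
    lcConv (poissonPmf a) (poissonPmf b) k = poissonPmf (a + b) k := by
  unfold lcConv poissonPmf
  rw [neg_add, Real.exp_add, add_pow]
  rw [Finset.mul_sum, Finset.sum_div]
  refine Finset.sum_congr rfl fun i hi => ?_
  have hik : i ≤ k := Nat.lt_succ_iff.mp (Finset.mem_range.mp hi)
  have hfact : (k.choose i : ℝ) * i.factorial * (k - i).factorial = k.factorial := by
    exact_mod_cast congrArg (Nat.cast (R := ℝ)) (Nat.choose_mul_factorial_mul_factorial hik)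
  have h1 : (i.factorial : ℝ) ≠ 0 := Nat.cast_ne_zero.mpr (Nat.factorial_ne_zero i)
  have h2 : ((k - i).factorial : ℝ) ≠ 0 := Nat.cast_ne_zero.mpr (Nat.factorial_ne_zero (k-i))
  have h3 : (k.factorial : ℝ) ≠ 0 := Nat.cast_ne_zero.mpr (Nat.factorial_ne_zero k)
  field_simp
  rw [← hfact]; ring


lemma binom_nonneg {p : ℝ} (hp0 : 0 ≤ p) (hp1 : p ≤ 1) (n k : ℕ) : 0 ≤ binomialPmf n p k := by
  unfold binomialPmf
  split
  · have h1 : (0:ℝ) ≤ 1 - p := by linarith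
    positivity
  · exact le_refl 0

lemma binom_zero_of_gt {p : ℝ} {n k : ℕ} (h : n < k) : binomialPmf n p k = 0 := by
  unfold binomialPmf; rw [if_neg (by omega)]

lemma binom_summable (n : ℕ) (p : ℝ) : Summable (binomialPmf n p) :=
  summable_of_ne_finset_zero (s := range (n + 1)) fun k hk =>
    binom_zero_of_gt (by simpa using hk)

lemma binom_tsum (n : ℕ) (p : ℝ) : ∑' k, binomialPmf n p k = 1 := by
  rw [tsum_eq_sum (s := range (n + 1)) fun k hk => binom_zero_of_gt (by simpa using hk)]
  have h : (1:ℝ) = ∑ k ∈ range (n + 1), p ^ k * (1 - p) ^ (n - k) * n.choose k := by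
    have h0 := add_pow p (1 - p) n
    rw [show p + (1 - p) = 1 by ring, one_pow] at h0
    exact h0
  rw [h]
  refine Finset.sum_congr rfl fun k hk => ?_
  rw [binomialPmf, if_pos (Nat.lt_succ_iff.mp (mem_range.mp hk))]
  ring

lemma binom_one (p : ℝ) : binomialPmf 1 p 0 = 1 - p ∧ binomialPmf 1 p 1 = p ∧
    ∀ k, 2 ≤ k → binomialPmf 1 p k = 0 := by
  refine ⟨by simp [binomialPmf], by simp [binomialPmf], fun k hk => binom_zero_of_gt (by omega)⟩

lemma binom_succ (n : ℕ) (p : ℝ) (k : ℕ) :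
    binomialPmf (n + 1) p k = lcConv (binomialPmf 1 p) (binomialPmf n p) k := by
  obtain ⟨hb0, hb1, hb2⟩ := binom_one p
  cases k with
  | zero =>
      simp only [lcConv, Finset.sum_range_one, Nat.sub_zero, hb0]
      by_cases h : 0 ≤ n
      · simp [binomialPmf, pow_succ, mul_comm]
      · omega
  | succ j =>
      have hsum : lcConv (binomialPmf 1 p) (binomialPmf n p) (j + 1)
          = (1 - p) * binomialPmf n p (j + 1) + p * binomialPmf n p j := by
        rw [lcConv, Finset.sum_range_succ' _ (j + 1), Finset.sum_range_succ' _ j]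
        have : ∀ i ∈ range j, binomialPmf 1 p (i + 1 + 1) * binomialPmf n p (j + 1 - (i + 1 + 1)) = 0 := by
          intro i _; rw [hb2 _ (by omega), zero_mul]
        rw [Finset.sum_congr rfl this, Finset.sum_const_zero]
        simp [hb0, hb1]; ring
      rw [hsum]
      by_cases hjn : j + 1 ≤ n + 1
      · by_cases hj : j + 1 ≤ n
        · have e1 : n - j = (n - (j + 1)) + 1 := by omega
          have e2 : n + 1 - (j + 1) = n - j := by omega
          unfold binomialPmf
          rw [if_pos hjn, if_pos hj, if_pos (by omega : j ≤ n), e2, e1,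
            Nat.choose_succ_succ]
          push_cast
          ring
        · have hj' : j = n := by omega
          subst hj'
          unfold binomialPmf
          rw [if_pos hjn, if_neg (by omega), if_pos (le_refl _)]
          simp [Nat.sub_self, pow_succ]
          ring
      · unfold binomialPmf
        rw [if_neg (by omega), if_neg (by omega), if_neg (by omega)]
        ring


lemma abs_summable_congr {f : ℕ → ℝ} (hf : Summable fun k => |f k|) :
    Summable fun k => ‖f k‖ := hf

lemma conv_nonneg_summable {f g : ℕ → ℝ} (hfn : ∀ k, 0 ≤ f k) (hgn : ∀ k, 0 ≤ g k)
    (hf : Summable f) (hg : Summable g) : Summable (lcConv f g) := by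
  have h := summable_norm_sum_mul_range_of_summable_norm (f := f) (g := g)
    (hf.congr fun k => (Real.norm_eq_abs _).symm ▸ (abs_of_nonneg (hfn k)).symm)
    (hg.congr fun k => (Real.norm_eq_abs _).symm ▸ (abs_of_nonneg (hgn k)).symm)
  refine h.congr fun k => ?_
  rw [Real.norm_eq_abs,
    abs_of_nonneg (Finset.sum_nonneg fun i _ => mul_nonneg (hfn i) (hgn (k - i)))]
  rfl

lemma conv_tsum {f g : ℕ → ℝ} (hfn : ∀ k, 0 ≤ f k) (hgn : ∀ k, 0 ≤ g k)
    (hf : Summable f) (hg : Summable g) :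
    ∑' k, lcConv f g k = (∑' k, f k) * (∑' k, g k) := by
  exact (tsum_mul_tsum_eq_tsum_sum_range_of_summable_norm
    (hf.congr fun k => (Real.norm_eq_abs _).symm ▸ (abs_of_nonneg (hfn k)).symm)
    (hg.congr fun k => (Real.norm_eq_abs _).symm ▸ (abs_of_nonneg (hgn k)).symm)).symm

lemma conv_l1 {f f' g g' : ℕ → ℝ}
    (hf : Summable fun k => |f k|) (hf' : Summable f') (hg : Summable g)
    (hg' : Summable fun k => |g' k|)
    (hf'n : ∀ k, 0 ≤ f' k) (hgn : ∀ k, 0 ≤ g k)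
    (hf'1 : ∑' k, f' k = 1) (hg1 : ∑' k, g k = 1) :
    ∑' k, |lcConv f g k - lcConv f' g' k| ≤
      (∑' k, |f k - f' k|) + (∑' k, |g k - g' k|) := by
  set F : ℕ → ℝ := fun k => |f k - f' k| with hF
  set G : ℕ → ℝ := fun k => |g k - g' k| with hG
  have hFn : ∀ k, 0 ≤ F k := fun k => abs_nonneg _
  have hGn : ∀ k, 0 ≤ G k := fun k => abs_nonneg _
  have hFs : Summable F := by
    refine Summable.of_nonneg_of_le hFn (fun k => (abs_sub _ _).trans ?_) (hf.add hf'.abs)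
    exact add_le_add le_rfl le_rfl
  have hGs : Summable G := by
    refine Summable.of_nonneg_of_le hGn (fun k => (abs_sub _ _).trans ?_) (hg.abs.add hg')
    exact add_le_add le_rfl le_rfl
  have hA : Summable (lcConv F g) := conv_nonneg_summable hFn hgn hFs hg
  have hB : Summable (lcConv f' G) := conv_nonneg_summable hf'n hGn hf' hGs
  have hpt : ∀ k, |lcConv f g k - lcConv f' g' k| ≤ lcConv F g k + lcConv f' G k := by
    intro k
    have hsplit : lcConv f g k - lcConv f' g' k =
        (∑ i ∈ range (k + 1), (f i - f' i) * g (k - i)) +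
        (∑ i ∈ range (k + 1), f' i * (g (k - i) - g' (k - i))) := by
      unfold lcConv
      rw [← Finset.sum_add_distrib, ← Finset.sum_sub_distrib]
      exact Finset.sum_congr rfl fun i _ => by ring
    rw [hsplit]
    refine (abs_add_le _ _).trans (add_le_add ?_ ?_)
    · refine (Finset.abs_sum_le_sum_abs _ _).trans ?_
      refine Finset.sum_le_sum fun i _ => ?_
      rw [abs_mul, abs_of_nonneg (hgn _)]
    · refine (Finset.abs_sum_le_sum_abs _ _).trans ?_
      refine Finset.sum_le_sum fun i _ => ?_
      rw [abs_mul, abs_of_nonneg (hf'n _)]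
  calc ∑' k, |lcConv f g k - lcConv f' g' k|
      ≤ ∑' k, (lcConv F g k + lcConv f' G k) := by
        refine Summable.tsum_le_tsum hpt ?_ (hA.add hB)
        refine Summable.of_nonneg_of_le (fun k => abs_nonneg _) hpt (hA.add hB)
    _ = (∑' k, lcConv F g k) + ∑' k, lcConv f' G k := Summable.tsum_add hA hB
    _ = (∑' k, F k) * (∑' k, g k) + (∑' k, f' k) * (∑' k, G k) := by
        rw [conv_tsum hFn hgn hFs hg, conv_tsum hf'n hGn hf' hGs]
    _ = (∑' k, F k) + (∑' k, G k) := by rw [hg1, hf'1, mul_one, one_mul]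


lemma diff_summable {p l : ℝ} (n : ℕ) :
    Summable fun k => |binomialPmf n p k - poissonPmf l k| := by
  refine Summable.of_nonneg_of_le (fun k => abs_nonneg _)
    (fun k => (abs_sub _ _).trans (add_le_add le_rfl le_rfl))
    (((binom_summable n p).abs).add (pois_summable l).abs)

lemma lecam_induction {p : ℝ} (hp0 : 0 ≤ p) (hp1 : p ≤ 1) (m : ℕ) :
    ∑' k, |binomialPmf m p k - poissonPmf (m * p) k| ≤
      m * ∑' k, |binomialPmf 1 p k - poissonPmf p k| := by
  induction m with
  | zero =>
      have h : ∀ k, |binomialPmf 0 p k - poissonPmf ((0:ℕ) * p) k| = 0 := by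
        intro k
        have : binomialPmf 0 p k = poissonPmf ((0:ℕ) * p) k := by
          cases k with
          | zero => simp [binomialPmf, poissonPmf]
          | succ j => simp [binomialPmf, poissonPmf]
        rw [this, sub_self, abs_zero]
      rw [tsum_congr h, tsum_zero]
      simp
  | succ m ih =>
      have hbin : ∀ k, binomialPmf (m + 1) p k =
          lcConv (binomialPmf 1 p) (binomialPmf m p) k := binom_succ m p
      have hpois : ∀ k, poissonPmf ((m + 1 : ℕ) * p) k =
          lcConv (poissonPmf p) (poissonPmf (m * p)) k := by
        intro k
        rw [pois_conv]
        congr 1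
        push_cast
        ring
      calc ∑' k, |binomialPmf (m + 1) p k - poissonPmf ((m + 1 : ℕ) * p) k|
          = ∑' k, |lcConv (binomialPmf 1 p) (binomialPmf m p) k -
              lcConv (poissonPmf p) (poissonPmf (m * p)) k| := by
            exact tsum_congr fun k => by rw [hbin k, hpois k]
        _ ≤ (∑' k, |binomialPmf 1 p k - poissonPmf p k|) +
            ∑' k, |binomialPmf m p k - poissonPmf (m * p) k| := by
            refine conv_l1 ((binom_summable 1 p).abs) (pois_summable p)
              (binom_summable m p) ((pois_summable (m * p)).abs)
              (pois_nonneg hp0) (binom_nonneg hp0 hp1 m)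
              pois_tsum (binom_tsum m p)
        _ ≤ (∑' k, |binomialPmf 1 p k - poissonPmf p k|) +
            m * ∑' k, |binomialPmf 1 p k - poissonPmf p k| := by linarith
        _ = (m + 1 : ℕ) * ∑' k, |binomialPmf 1 p k - poissonPmf p k| := by
            push_cast; ring

lemma lecam_single {p : ℝ} (hp0 : 0 ≤ p) (hp1 : p ≤ 1) :
    ∑' k, |binomialPmf 1 p k - poissonPmf p k| ≤ 2 * p ^ 2 := by
  obtain ⟨hb0, hb1, hb2⟩ := binom_one p
  have hq0 : poissonPmf p 0 = Real.exp (-p) := by simp [poissonPmf]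
  have hq1 : poissonPmf p 1 = Real.exp (-p) * p := by simp [poissonPmf]
  have hds := diff_summable (p := p) (l := p) 1
  have hsplit := Summable.sum_add_tsum_nat_add (f := fun k => |binomialPmf 1 p k - poissonPmf p k|) 2 hds
  have hpsplit := Summable.sum_add_tsum_nat_add (f := poissonPmf p) 2 (pois_summable p)
  rw [pois_tsum] at hpsplit
  have htail : (∑' j : ℕ, |binomialPmf 1 p (j + 2) - poissonPmf p (j + 2)|)
      = ∑' j : ℕ, poissonPmf p (j + 2) := by
    refine tsum_congr fun j => ?_
    rw [hb2 _ (by omega), zero_sub, abs_neg, abs_of_nonneg (pois_nonneg hp0 _)]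
  have hE1 : 1 - p ≤ Real.exp (-p) := by have := Real.add_one_le_exp (-p); linarith
  have hE2 : Real.exp (-p) ≤ 1 := by
    rw [show (1:ℝ) = Real.exp 0 by simp]
    exact Real.exp_le_exp.mpr (by linarith)
  have hEpos : 0 < Real.exp (-p) := Real.exp_pos _
  rw [← hsplit, htail]
  have htailval : ∑' j : ℕ, poissonPmf p (j + 2) =
      1 - (poissonPmf p 0 + poissonPmf p 1) := by
    rw [Finset.sum_range_succ, Finset.sum_range_one] at hpsplit
    linarith
  rw [htailval, Finset.sum_range_succ, Finset.sum_range_one, hb0, hb1, hq0, hq1]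
  rw [abs_of_nonpos (by linarith), abs_of_nonneg (by nlinarith)]
  nlinarith [mul_nonneg hp0 hp0, mul_nonneg hp0 (sub_nonneg.mpr hE2)]

/-- Special case of Le Cam's theorem: for `0 ≤ λ ≤ n`, the total variation distance between
`Binomial(n, λ/n)` and `Poisson(λ)` satisfies
`Σₖ |P[Bin(n,λ/n)=k] − P[Poisson(λ)=k]| ≤ 2λ²/n`. -/
theorem stmt7 (n : ℕ) (hn : 0 < n) (lam : ℝ) (hlam : 0 ≤ lam) (hle : lam ≤ n) :
    ∑' k : ℕ, |binomialPmf n (lam / n) k - poissonPmf lam k| ≤ 2 * lam ^ 2 / n := by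
  have hn' : (n : ℝ) ≠ 0 := Nat.cast_ne_zero.mpr hn.ne'
  have hnpos : (0:ℝ) < n := Nat.cast_pos.mpr hn
  set p : ℝ := lam / n with hp
  have hp0 : 0 ≤ p := div_nonneg hlam hnpos.le
  have hp1 : p ≤ 1 := by rw [hp, div_le_one hnpos]; exact hle
  have hnp : (n : ℝ) * p = lam := by rw [hp]; field_simp
  have h1 := lecam_induction hp0 hp1 n
  rw [hnp] at h1
  have h2 := lecam_single hp0 hp1
  calc ∑' k : ℕ, |binomialPmf n p k - poissonPmf lam k|
      ≤ n * ∑' k, |binomialPmf 1 p k - poissonPmf p k| := h1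
    _ ≤ n * (2 * p ^ 2) := by
        exact mul_le_mul_of_nonneg_left h2 hnpos.le
    _ = 2 * lam ^ 2 / n := by rw [hp]; field_simp
end

section
/- Let h_c(x) := (x + c)·ξ(x), where ξ : X → ℝ is positive, differentiable with ξ' < 0 on the interior of an unbounded-above interval X, and x ↦ ξ(x)/ξ'(x) is non-decreasing. Then there exists M such that h_c is strictly decreasing on (M, ∞); in particular, for all M' > M, (M' + c)ξ(M') < (M + c)ξ(M). -/
open Filter

/-- For `h_c x = (x + c) ξ x` with `ξ` positive, strictly decreasing, differentiable with
`ξ' < 0` on the interior of an unbounded-above interval `X`, `ξ → 0` at `+∞`, and `ξ/ξ'`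
non-decreasing, there exists `M` such that `h_c` is strictly decreasing beyond `M`:
for all `x, y ∈ X` with `M < x < y`, `(y + c) ξ y < (x + c) ξ x`. -/
theorem stmt9 (X : Set ℝ) (hX : X.OrdConnected) (hXub : ¬ BddAbove X)
    (ξ ξ' : ℝ → ℝ) (c : ℝ)
    (hpos : ∀ x ∈ X, 0 < ξ x)
    (hanti : StrictAntiOn ξ X)
    (hderiv : ∀ x ∈ interior X, HasDerivAt ξ (ξ' x) x)
    (hderiv_neg : ∀ x ∈ interior X, ξ' x < 0)
    (hmono : MonotoneOn (fun x => ξ x / ξ' x) (interior X))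
    (htend : Tendsto ξ atTop (nhds 0)) :
    ∃ M : ℝ, ∀ x ∈ X, ∀ y ∈ X, M < x → x < y → (y + c) * ξ y < (x + c) * ξ x := by
  obtain ⟨a, ha⟩ : X.Nonempty := by
    rcases X.eq_empty_or_nonempty with h | h
    · exact absurd (h ▸ bddAbove_empty) hXub
    · exact h
  obtain ⟨b, hb, hab⟩ : ∃ b ∈ X, a < b := by
    by_contra h
    push_neg at h
    exact hXub ⟨a, fun z hz => h z hz⟩
  set x₀ := (a + b) / 2 with hx₀def
  have hax₀ : a < x₀ := by rw [hx₀def]; linarith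
  have hx₀b : x₀ < b := by rw [hx₀def]; linarith
  have hx₀int : x₀ ∈ interior X :=
    mem_interior.2 ⟨Set.Ioo a b, (Set.Ioo_subset_Icc_self).trans (hX.out ha hb),
      isOpen_Ioo, ⟨hax₀, hx₀b⟩⟩
  have hint : ∀ t ∈ X, x₀ < t → t ∈ interior X := by
    intro t ht hlt
    obtain ⟨z, hz, htz⟩ : ∃ z ∈ X, t < z := by
      by_contra h
      push_neg at h
      exact hXub ⟨t, fun w hw => h w hw⟩
    exact mem_interior.2 ⟨Set.Ioo a z, Set.Ioo_subset_Icc_self.trans (hX.out ha hz),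
      isOpen_Ioo, ⟨lt_trans hax₀ hlt, htz⟩⟩
  set K := ξ x₀ / ξ' x₀ with hK
  refine ⟨max x₀ (-c - K), ?_⟩
  intro x hx y hy hMx hxy
  have hx₀x : x₀ < x := lt_of_le_of_lt (le_max_left _ _) hMx
  have key : ∀ t ∈ X, max x₀ (-c - K) < t → deriv (fun s => (s + c) * ξ s) t < 0 := by
    intro t ht hMt
    have htint : t ∈ interior X := hint t ht (lt_of_le_of_lt (le_max_left _ _) hMt)
    have hd : HasDerivAt (fun s => (s + c) * ξ s) (1 * ξ t + (t + c) * ξ' t) t :=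
      ((hasDerivAt_id t).add_const c).mul (hderiv t htint)
    rw [hd.deriv]
    have h1 : ξ' t < 0 := hderiv_neg t htint
    have h2 : K ≤ ξ t / ξ' t :=
      hmono hx₀int htint (le_of_lt (lt_of_le_of_lt (le_max_left _ _) hMt))
    have h3 : -c - K < t := lt_of_le_of_lt (le_max_right _ _) hMt
    have h4 : 0 < t + c + ξ t / ξ' t := by linarith
    have h5 : ξ t = ξ' t * (ξ t / ξ' t) := by field_simp [ne_of_lt h1]
    nlinarith [mul_pos (neg_pos.2 h1) h4]
  have hsub : Set.Icc x y ⊆ X := hX.out hx hy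
  have hanti2 : StrictAntiOn (fun s => (s + c) * ξ s) (Set.Icc x y) := by
    apply strictAntiOn_of_deriv_neg (convex_Icc x y)
    · intro t ht
      have htint : t ∈ interior X := hint t (hsub ht) (lt_of_lt_of_le hx₀x ht.1)
      exact (((hasDerivAt_id t).add_const c).mul
        (hderiv t htint)).continuousAt.continuousWithinAt
    · intro t ht
      rw [interior_Icc] at ht
      exact key t (hsub ⟨le_of_lt ht.1, le_of_lt ht.2⟩) (lt_trans hMx ht.1)
  exact hanti2 ⟨le_refl x, le_of_lt hxy⟩ ⟨le_of_lt hxy, le_refl y⟩ hxy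
end
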